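/- Program equivalences for while loops via relational semantics: for any test b (predicate on states) and relation x (semantics of the loop body), ([b];(([b];x)*;[¬b]))*;[¬b] = ([b];x)*;[¬b] (nested while loops collapse), and ([b];(x;([b];x + [¬b];1)))*;[¬b] = ([b];x)*;[¬b] (loop folding), where ; is relational composition, * is reflexive transitive closure, [b] is the subidentity relation of b, and 1 is the identity relation. -/

import Mathlib

/-- Relational composition. -/
def relComp {S : Type*} (x y : Set (S × S)) : Set (S × S) :=
  {p | ∃ r, (p.1, r) ∈ x ∧ (r, p.2) ∈ y}

/-- Reflexive transitive closure of a relation, as a set of pairs. -/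
def relStar {S : Type*} (x : Set (S × S)) : Set (S × S) :=
  {p | Relation.ReflTransGen (fun a b => (a, b) ∈ x) p.1 p.2}

/-- Embedding of a decidable predicate as a subidentity relation. -/
def relTest {S : Type*} (b : S → Bool) : Set (S × S) :=
  {p | p.1 = p.2 ∧ b p.1 = true}

/-- The identity relation. -/
def relId (S : Type*) : Set (S × S) := {p | p.1 = p.2}

/-! A terminating run of `while b do r` is an `r`-path all of whose states but the last satisfy
`b`, ending in a state that violates `b`. The nested loop has the same runs because such a path
is a single iteration of the outer loop (or no iteration, if it is empty). For loop folding, a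
path of the original loop is cut into pairs of steps, the last pair possibly being a single step
into a state violating `b`; conversely each iteration of the folded loop is one or two steps. -/

open Relation

namespace WhileLoop

variable {S : Type*} (b : S → Bool)

/-- Input-output relation of `while b do r`. -/
def loop (r : S → S → Prop) (a c : S) : Prop :=
  ReflTransGen (fun s t => b s = true ∧ r s t) a c ∧ b c = false

variable {b}

theorem eq_of_reflTransGen_guarded {r : S → S → Prop} {a c : S}
    (h : ReflTransGen (fun s t => b s = true ∧ r s t) a c) (ha : b a = false) : a = c := by
  rcases h.cases_head with rfl | ⟨_, ⟨hb, _⟩, _⟩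
  · rfl
  · simp [hb] at ha

theorem loop_loop (r : S → S → Prop) : loop b (loop b r) = loop b r := by
  ext a c
  refine ⟨fun ⟨h, hc⟩ => ⟨reflTransGen_closed (fun _ _ hst => hst.2.1) _ _ h, hc⟩,
    fun ⟨h, hc⟩ => ⟨?_, hc⟩⟩
  cases ha : b a
  · rw [eq_of_reflTransGen_guarded h ha]
  · exact .single ⟨ha, h, hc⟩

variable (b) in
/-- The body `r; if b then r else skip` of the folded loop. -/
def foldBody (r : S → S → Prop) (a c : S) : Prop :=
  ∃ m, r a m ∧ (b m = true ∧ r m c ∨ m = c ∧ b m = false)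

theorem reflTransGen_guarded_of_foldBody {r : S → S → Prop} :
    ReflTransGen (fun s t => b s = true ∧ foldBody b r s t) ≤
      ReflTransGen (fun s t => b s = true ∧ r s t) := by
  refine reflTransGen_closed fun a c ⟨ha, m, ham, hmc⟩ => ?_
  rcases hmc with ⟨hm, hmc⟩ | ⟨rfl, _⟩
  · exact .head ⟨ha, ham⟩ (.single ⟨hm, hmc⟩)
  · exact .single ⟨ha, ham⟩

/-- Strengthened so that the induction goes through: a path may also be entered one step early,
which is what lets its steps be paired off from the front. -/
theorem reflTransGen_foldBody_of_guarded {r : S → S → Prop} {a c : S}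
    (h : ReflTransGen (fun s t => b s = true ∧ r s t) a c) (hc : b c = false) :
    ReflTransGen (fun s t => b s = true ∧ foldBody b r s t) a c ∧
      ∀ a₀, b a₀ = true → r a₀ a →
        ReflTransGen (fun s t => b s = true ∧ foldBody b r s t) a₀ c := by
  induction h using ReflTransGen.head_induction_on with
  | refl => exact ⟨.refl, fun a₀ ha₀ h₀ => .single ⟨ha₀, c, h₀, .inr ⟨rfl, hc⟩⟩⟩
  | @head a a' hstep _ ih =>
    obtain ⟨ha, haa'⟩ := hstep
    exact ⟨ih.2 a ha haa', fun a₀ ha₀ h₀ => .head ⟨ha₀, a, h₀, .inl ⟨ha, haa'⟩⟩ ih.1⟩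

theorem loop_foldBody (r : S → S → Prop) : loop b (foldBody b r) = loop b r := by
  ext a c
  exact ⟨fun ⟨h, hc⟩ => ⟨reflTransGen_guarded_of_foldBody _ _ h, hc⟩,
    fun ⟨h, hc⟩ => ⟨(reflTransGen_foldBody_of_guarded h hc).1, hc⟩⟩

end WhileLoop

section SetRelations

variable {S : Type*}

theorem mem_relComp_relTest_left {b : S → Bool} {y : Set (S × S)} {a c : S} :
    (a, c) ∈ relComp (relTest b) y ↔ b a = true ∧ (a, c) ∈ y := by
  simp [relComp, relTest]

theorem mem_relComp_relTest_right {b : S → Bool} {y : Set (S × S)} {a c : S} :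
    (a, c) ∈ relComp y (relTest b) ↔ (a, c) ∈ y ∧ b c = true := by
  simp [relComp, relTest]

theorem relComp_relId (y : Set (S × S)) : relComp y (relId S) = y := by
  ext ⟨a, c⟩
  simp [relComp, relId]

def whileRel (b : S → Bool) (y : Set (S × S)) : Set (S × S) :=
  relComp (relStar (relComp (relTest b) y)) (relTest fun s => !b s)

theorem mem_whileRel {b : S → Bool} {y : Set (S × S)} {a c : S} :
    (a, c) ∈ whileRel b y ↔ WhileLoop.loop b (fun s t => (s, t) ∈ y) a c := by
  simp only [whileRel, mem_relComp_relTest_right, relStar, Set.mem_ofPred_eq,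
    mem_relComp_relTest_left, Bool.not_eq_true', WhileLoop.loop]

theorem whileRel_whileRel (b : S → Bool) (y : Set (S × S)) :
    whileRel b (whileRel b y) = whileRel b y := by
  ext ⟨a, c⟩
  simp only [mem_whileRel, WhileLoop.loop_loop]

theorem mem_relComp_foldBody {b : S → Bool} {y : Set (S × S)} {a c : S} :
    (a, c) ∈ relComp y (relComp (relTest b) y ∪ relComp (relTest fun s => !b s) (relId S)) ↔
      WhileLoop.foldBody b (fun s t => (s, t) ∈ y) a c := by
  rw [relComp_relId]
  simp [relComp, relTest, WhileLoop.foldBody]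

theorem whileRel_fold (b : S → Bool) (y : Set (S × S)) :
    whileRel b (relComp y (relComp (relTest b) y ∪ relComp (relTest fun s => !b s) (relId S))) =
      whileRel b y := by
  ext ⟨a, c⟩
  simp only [mem_whileRel, mem_relComp_foldBody, WhileLoop.loop_foldBody]

end SetRelations

theorem while_equivalences {S : Type*} (b : S → Bool) (x : Set (S × S)) :
    relComp (relStar (relComp (relTest b)
        (relComp (relStar (relComp (relTest b) x)) (relTest (fun s => !b s)))))
      (relTest (fun s => !b s))
      = relComp (relStar (relComp (relTest b) x)) (relTest (fun s => !b s))
    ∧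
    relComp (relStar (relComp (relTest b)
        (relComp x (relComp (relTest b) x ∪ relComp (relTest (fun s => !b s)) (relId S)))))
      (relTest (fun s => !b s))
      = relComp (relStar (relComp (relTest b) x)) (relTest (fun s => !b s)) :=
  ⟨whileRel_whileRel b x, whileRel_fold b x⟩
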